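/- Let E be a real normed vector space of finite dimension m ≥ 1, let B = closedBall(c,R) with R > 0, let σ ∈ (0,1], k ≥ 1, and set δ = R·(σ/(2k²))^{1/m}. Suppose each request r_t (t = 1,…,T) is a tuple of k_t ≤ k points of B, generated adaptively so that, conditionally on all previous requests, each coordinate of r_t has a distribution that is (almost surely) σ-smooth with respect to B. Then for every start point p_0 ∈ B, the expected optimal offline cost for chasing these sets satisfies E[opt] ≥ (δ/2)·T = (R/2)·(σ/(2k²))^{1/m}·T. -/

import Mathlib

/-!
On the event that every point of `r t` lies farther than `δ` from every point of `r (t - 1)`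
(from `p₀` when `t = 1`), every serving path pays more than `δ` at step `t`. Given `F (t - 1)`,
a coordinate of `r t` lands within `δ` of an `F (t - 1)`-measurable point with probability at
most `vol (closedBall _ δ) / (σ · vol B) = (δ / R) ^ m / σ = 1 / (2 k²)`; to evaluate the
conditional bound at a random centre, the centre is localised along a countable partition of `E`
into small sets. A union bound over the at most `k²` pairs gives the event probability at least
`1 / 2`, so `𝔼[opt] ≥ ∑ₜ δ · 1 / 2 = δ T / 2`.
-/

open MeasureTheory Metric Filter
open scoped ENNReal

section HaarBalls

variable {E : Type*} [NormedAddCommGroup E] [NormedSpace ℝ E] [MeasurableSpace E] [BorelSpace E]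
  [FiniteDimensional ℝ E] (vol : Measure E) [vol.IsAddHaarMeasure]

theorem addHaar_real_closedBall_div_addHaar_real_closedBall (z c : E) {ρ R : ℝ} (hρ : 0 ≤ ρ)
    (hR : 0 < R) :
    vol.real (closedBall z ρ) / vol.real (closedBall c R) = (ρ / R) ^ Module.finrank ℝ E := by
  have hunit : 0 < vol.real (closedBall (0 : E) 1) :=
    ENNReal.toReal_pos (measure_closedBall_pos vol 0 one_pos).ne' measure_closedBall_lt_top.ne
  rw [Measure.addHaar_real_closedBall' vol z hρ, Measure.addHaar_real_closedBall' vol c hR.le,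
    div_pow]
  field_simp

end HaarBalls

theorem measureReal_inter_le_of_condExp_indicator_le {Ω : Type*} {mF m0 : MeasurableSpace Ω}
    (hmF : mF ≤ m0) {P : Measure Ω} [IsFiniteMeasure P] {B A : Set Ω} (hB : MeasurableSet B)
    (hA : MeasurableSet[mF] A) {b : ℝ}
    (hb : ∀ᵐ ω ∂P, (P[B.indicator (fun _ => (1 : ℝ)) | mF]) ω ≤ b) :
    P.real (B ∩ A) ≤ b * P.real A := by
  calc P.real (B ∩ A) = ∫ ω in A, B.indicator (fun _ => (1 : ℝ)) ω ∂P := by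
        rw [integral_indicator_const _ hB, measureReal_restrict_apply hB, smul_eq_mul, mul_one]
    _ = ∫ ω in A, (P[B.indicator (fun _ => (1 : ℝ)) | mF]) ω ∂P :=
        (setIntegral_condExp hmF ((integrable_const 1).indicator hB) hA).symm
    _ ≤ ∫ _ in A, b ∂P :=
        setIntegral_mono_ae integrable_condExp.integrableOn integrableOn_const hb
    _ = b * P.real A := by rw [setIntegral_const, smul_eq_mul, mul_comm]

theorem measure_dist_le_le_of_forall_closedBall {Ω E : Type*} {mF m0 : MeasurableSpace Ω}
    [PseudoMetricSpace E] [TopologicalSpace.SeparableSpace E] [MeasurableSpace E]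
    [OpensMeasurableSpace E] (hmF : mF ≤ m0) (P : Measure Ω) {X q : Ω → E}
    (hq : Measurable[mF] q) {δ ρ : ℝ} (hδρ : δ < ρ) {b : ℝ≥0∞}
    (hb : ∀ z A, MeasurableSet[mF] A → P (X ⁻¹' closedBall z ρ ∩ A) ≤ b * P A) :
    P {ω | dist (X ω) (q ω) ≤ δ} ≤ b * P Set.univ := by
  rcases isEmpty_or_nonempty E with hE | hE
  · have := q.isEmpty
    simp [Set.eq_empty_of_isEmpty]
  set u := TopologicalSpace.denseSeq E
  set C := disjointed fun n => ball (u n) (ρ - δ)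
  have hC_meas : ∀ n, MeasurableSet[mF] (q ⁻¹' C n) := fun n =>
    hq (MeasurableSet.disjointed (fun _ => measurableSet_ball) n)
  have hC_cover : ∀ x, ∃ n, x ∈ C n := fun x => by
    obtain ⟨n, hn⟩ := (TopologicalSpace.denseRange_denseSeq E).exists_dist_lt x (sub_pos.2 hδρ)
    have hx : x ∈ ⋃ n, C n := by
      rw [iUnion_disjointed]
      exact Set.mem_iUnion.2 ⟨n, hn⟩
    exact Set.mem_iUnion.1 hx
  have hsub : {ω | dist (X ω) (q ω) ≤ δ} ⊆ ⋃ n, X ⁻¹' closedBall (u n) ρ ∩ q ⁻¹' C n := by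
    intro ω hω
    obtain ⟨n, hn⟩ := hC_cover (q ω)
    have hqu : dist (q ω) (u n) < ρ - δ := mem_ball.1 (disjointed_subset _ n hn)
    refine Set.mem_iUnion.2 ⟨n, mem_closedBall.2 ?_, hn⟩
    linarith [dist_triangle (X ω) (q ω) (u n), hω.out]
  calc P {ω | dist (X ω) (q ω) ≤ δ}
      ≤ ∑' n, P (X ⁻¹' closedBall (u n) ρ ∩ q ⁻¹' C n) :=
        (measure_mono hsub).trans (measure_iUnion_le _)
    _ ≤ ∑' n, b * P (q ⁻¹' C n) := ENNReal.tsum_le_tsum fun n => hb _ _ (hC_meas n)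
    _ = b * P (⋃ n, q ⁻¹' C n) := by
        rw [ENNReal.tsum_mul_left, measure_iUnion
          (fun i j hij => (disjoint_disjointed _ hij).preimage q) fun n => hmF _ (hC_meas n)]
    _ ≤ b * P Set.univ := by gcongr; exact Set.subset_univ _

theorem measurableSet_forall_dist_gt {Ω E ι κ : Type*} [MeasurableSpace Ω] [PseudoMetricSpace E]
    [MeasurableSpace E] [OpensMeasurableSpace E] [SecondCountableTopology E] [Countable ι]
    [Countable κ] {X : ι → Ω → E} {Y : κ → Ω → E} (hX : ∀ i, Measurable (X i))
    (hY : ∀ j, Measurable (Y j)) (δ : ℝ) :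
    MeasurableSet {ω | ∀ i j, δ < dist (X i ω) (Y j ω)} := by
  simp only [Set.ofPred_forall]
  exact .iInter fun i => .iInter fun j => measurableSet_lt measurable_const ((hX i).dist (hY j))

theorem div_pow_eq_of_eq_mul_rpow {R a δ : ℝ} {m : ℕ} (hR : R ≠ 0) (ha : 0 ≤ a) (hm : m ≠ 0)
    (hδ : δ = R * a ^ ((1 : ℝ) / m)) : (δ / R) ^ m = a := by
  rw [hδ, mul_div_cancel_left₀ _ hR, ← Real.rpow_natCast, ← Real.rpow_mul ha,
    one_div_mul_cancel (by exact_mod_cast hm), Real.rpow_one]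

section CondSmooth

variable {Ω E : Type*} {mF m0 : MeasurableSpace Ω} [NormedAddCommGroup E] [NormedSpace ℝ E]
  [MeasurableSpace E] [BorelSpace E] [FiniteDimensional ℝ E]

/-- Conditionally on `mF`, the law of `X` is almost surely `σ`-smooth with respect to
`closedBall c R`. -/
def IsCondSmooth (P : Measure Ω) (mF : MeasurableSpace Ω) (vol : Measure E) (c : E) (R σ : ℝ)
    (X : Ω → E) : Prop :=
  (∀ᵐ ω ∂P, X ω ∈ closedBall c R) ∧
  ∀ S : Set E, S ⊆ closedBall c R → MeasurableSet S → ∀ᵐ ω ∂P,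
    (P[fun ω' => S.indicator (fun _ => (1 : ℝ)) (X ω') | mF]) ω ≤
      (vol S).toReal / (σ * (vol (closedBall c R)).toReal)

variable {P : Measure Ω} {vol : Measure E} [vol.IsAddHaarMeasure] {c : E} {R σ : ℝ}

theorem IsCondSmooth.measure_preimage_closedBall_inter_le [IsFiniteMeasure P] {X : Ω → E}
    (h : IsCondSmooth P mF vol c R σ X)
    (hmF : mF ≤ m0) (hX : Measurable X) (hR : 0 < R) (hσ : 0 < σ) (z : E) {ρ : ℝ} (hρ : 0 ≤ ρ)
    {A : Set Ω} (hA : MeasurableSet[mF] A) :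
    P (X ⁻¹' closedBall z ρ ∩ A) ≤
      ENNReal.ofReal ((ρ / R) ^ Module.finrank ℝ E / σ) * P A := by
  set S := closedBall z ρ ∩ closedBall c R
  have hS : MeasurableSet S := measurableSet_closedBall.inter measurableSet_closedBall
  have hvol : vol.real S / (σ * vol.real (closedBall c R)) ≤ (ρ / R) ^ Module.finrank ℝ E / σ :=
    calc vol.real S / (σ * vol.real (closedBall c R))
        ≤ vol.real (closedBall z ρ) / (σ * vol.real (closedBall c R)) := by
          gcongr
          · exact measure_closedBall_lt_top.ne
          · exact Set.inter_subset_left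
      _ = (ρ / R) ^ Module.finrank ℝ E / σ := by
          rw [← addHaar_real_closedBall_div_addHaar_real_closedBall vol z c hρ hR, div_div,
            mul_comm σ]
  have hsupp : (X ⁻¹' closedBall z ρ ∩ A : Set Ω) ≤ᵐ[P] (X ⁻¹' S ∩ A : Set Ω) := by
    filter_upwards [h.1] with ω hω hmem using ⟨⟨hmem.1, hω⟩, hmem.2⟩
  have hreal : P.real (X ⁻¹' S ∩ A) ≤ (ρ / R) ^ Module.finrank ℝ E / σ * P.real A :=
    (measureReal_inter_le_of_condExp_indicator_le hmF (hX hS) hA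
      (h.2 S Set.inter_subset_right hS)).trans
      (mul_le_mul_of_nonneg_right hvol measureReal_nonneg)
  calc P (X ⁻¹' closedBall z ρ ∩ A) ≤ P (X ⁻¹' S ∩ A) := measure_mono_ae hsupp
    _ = ENNReal.ofReal (P.real (X ⁻¹' S ∩ A)) := (ofReal_measureReal).symm
    _ ≤ ENNReal.ofReal ((ρ / R) ^ Module.finrank ℝ E / σ * P.real A) :=
        ENNReal.ofReal_le_ofReal hreal
    _ = ENNReal.ofReal ((ρ / R) ^ Module.finrank ℝ E / σ) * P A := by
        rw [ENNReal.ofReal_mul (by positivity), ofReal_measureReal]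

theorem IsCondSmooth.measure_dist_le_le [IsFiniteMeasure P] {X : Ω → E}
    (h : IsCondSmooth P mF vol c R σ X) (hmF : mF ≤ m0)
    (hX : Measurable X) (hR : 0 < R) (hσ : 0 < σ) {q : Ω → E} (hq : Measurable[mF] q) {δ : ℝ}
    (hδ : 0 ≤ δ) :
    P {ω | dist (X ω) (q ω) ≤ δ} ≤
      ENNReal.ofReal ((δ / R) ^ Module.finrank ℝ E / σ) * P Set.univ := by
  have hbound : Continuous fun ρ : ℝ =>
      ENNReal.ofReal ((ρ / R) ^ Module.finrank ℝ E / σ) * P Set.univ :=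
    (ENNReal.continuous_mul_const (measure_ne_top P _)).comp
      (ENNReal.continuous_ofReal.comp (by fun_prop))
  refine ge_of_tendsto ((hbound.tendsto δ).mono_left (nhdsWithin_le_nhds (s := Set.Ioi δ))) ?_
  filter_upwards [self_mem_nhdsWithin] with ρ (hρ : δ < ρ)
  exact measure_dist_le_le_of_forall_closedBall hmF P hq hρ fun z A hA =>
    h.measure_preimage_closedBall_inter_le hmF hX hR hσ z (hδ.trans hρ.le) hA

theorem one_sub_le_measureReal_forall_dist_gt [IsProbabilityMeasure P] {ι κ : Type*} [Fintype ι]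
    [Fintype κ] {X : ι → Ω → E} (hXs : ∀ i, IsCondSmooth P mF vol c R σ (X i)) (hmF : mF ≤ m0)
    (hX : ∀ i, Measurable (X i)) (hR : 0 < R) (hσ : 0 < σ) {Y : κ → Ω → E}
    (hY : ∀ j, Measurable[mF] (Y j)) {δ : ℝ} (hδ : 0 ≤ δ) :
    1 - Fintype.card ι * Fintype.card κ * ((δ / R) ^ Module.finrank ℝ E / σ) ≤
      P.real {ω | ∀ i j, δ < dist (X i ω) (Y j ω)} := by
  set β := (δ / R) ^ Module.finrank ℝ E / σ
  have hY0 : ∀ j, Measurable (Y j) := fun j => (hY j).mono hmF le_rfl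
  have hbad : P {ω | ∀ i j, δ < dist (X i ω) (Y j ω)}ᶜ ≤
      ENNReal.ofReal (Fintype.card ι * Fintype.card κ * β) := by
    have hcompl : {ω | ∀ i j, δ < dist (X i ω) (Y j ω)}ᶜ =
        ⋃ i, ⋃ j, {ω | dist (X i ω) (Y j ω) ≤ δ} := by
      ext ω; simp
    calc P {ω | ∀ i j, δ < dist (X i ω) (Y j ω)}ᶜ
        ≤ ∑ i, ∑ j, P {ω | dist (X i ω) (Y j ω) ≤ δ} := by
          rw [hcompl]
          exact (measure_iUnion_fintype_le _ _).trans
            (Finset.sum_le_sum fun i _ => measure_iUnion_fintype_le _ _)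
      _ ≤ ∑ _i : ι, ∑ _j : κ, ENNReal.ofReal β := by
          gcongr with i _ j _
          simpa using (hXs i).measure_dist_le_le hmF (hX i) hR hσ (hY j) hδ
      _ = ENNReal.ofReal (Fintype.card ι * Fintype.card κ * β) := by
          rw [ENNReal.ofReal_mul (by positivity), ENNReal.ofReal_mul (by positivity)]
          simp only [Finset.sum_const, Finset.card_univ, nsmul_eq_mul, ENNReal.ofReal_natCast]
          ring
  rw [← sub_le_sub_iff_left 1, sub_sub_cancel, ← probReal_compl_eq_one_sub
    (measurableSet_forall_dist_gt hX hY0 δ)]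
  exact ENNReal.toReal_le_of_le_ofReal (by positivity) hbad

theorem half_le_measureReal_forall_dist_gt [IsProbabilityMeasure P] {ι κ : Type*} [Fintype ι]
    [Fintype κ] {X : ι → Ω → E} (hXs : ∀ i, IsCondSmooth P mF vol c R σ (X i)) (hmF : mF ≤ m0)
    (hX : ∀ i, Measurable (X i)) (hR : 0 < R) (hσ : 0 < σ) {Y : κ → Ω → E}
    (hY : ∀ j, Measurable[mF] (Y j)) (hE : Module.finrank ℝ E ≠ 0) {k : ℕ} (hk : 0 < k)
    (hι : Fintype.card ι ≤ k) (hκ : Fintype.card κ ≤ k) {δ : ℝ}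
    (hδ : δ = R * (σ / (2 * (k : ℝ) ^ 2)) ^ ((1 : ℝ) / Module.finrank ℝ E)) :
    1 / 2 ≤ P.real {ω | ∀ i j, δ < dist (X i ω) (Y j ω)} := by
  have hk0 : (0 : ℝ) < k := by exact_mod_cast hk
  have hcard : (Fintype.card ι * Fintype.card κ : ℝ) ≤ k ^ 2 := by rw [sq]; gcongr
  refine le_trans ?_ (one_sub_le_measureReal_forall_dist_gt hXs hmF hX hR hσ hY
    (hδ ▸ by positivity))
  rw [div_pow_eq_of_eq_mul_rpow hR.ne' (by positivity) hE hδ]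
  field_simp
  linarith

end CondSmooth

section ChoicePaths

variable {E : Type*} {T : ℕ} {kt : ℕ → ℕ}

def choicePath (p₀ : E) (rv : (t : ℕ) → Fin (kt t) → E)
    (χ : (t : Finset.Icc 1 T) → Fin (kt t)) (s : ℕ) : E :=
  if h : s ∈ Finset.Icc 1 T then rv s (χ ⟨s, h⟩) else p₀

variable {p₀ : E} {rv : (t : ℕ) → Fin (kt t) → E}

theorem choicePath_zero (χ : (t : Finset.Icc 1 T) → Fin (kt t)) : choicePath p₀ rv χ 0 = p₀ :=
  dif_neg (by simp)

theorem choicePath_of_mem (χ : (t : Finset.Icc 1 T) → Fin (kt t)) {s : ℕ}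
    (hs : s ∈ Finset.Icc 1 T) : choicePath p₀ rv χ s = rv s (χ ⟨s, hs⟩) :=
  dif_pos hs

end ChoicePaths

section ServingPaths

variable {E : Type*} [PseudoMetricSpace E]

def pathCost (T : ℕ) (p : ℕ → E) : ℝ :=
  ∑ t ∈ Finset.Icc 1 T, dist (p (t - 1)) (p t)

noncomputable def optCost (p₀ : E) (T : ℕ) (kt : ℕ → ℕ) (rv : (t : ℕ) → Fin (kt t) → E) : ℝ :=
  sInf {x : ℝ | ∃ p : ℕ → E, p 0 = p₀ ∧ (∀ t ∈ Finset.Icc 1 T, ∃ i, p t = rv t i) ∧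
    x = pathCost T p}

variable {T : ℕ} {kt : ℕ → ℕ} {p₀ : E} {rv : (t : ℕ) → Fin (kt t) → E}

/-- A serving path only matters through the points it picks at times `1, …, T`. -/
theorem optCost_eq_iInf :
    optCost p₀ T kt rv =
      ⨅ χ : (t : Finset.Icc 1 T) → Fin (kt t), pathCost T (choicePath p₀ rv χ) := by
  rw [optCost, ← sInf_range]
  congr 1
  ext x
  constructor
  · rintro ⟨p, hp0, hp, rfl⟩
    choose χ hχ using hp
    refine ⟨fun t => χ t t.2, Finset.sum_congr rfl fun t ht => ?_⟩
    have hpath : ∀ s ∈ Finset.Icc 1 T, choicePath p₀ rv (fun t => χ t t.2) s = p s :=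
      fun s hs => (choicePath_of_mem _ hs).trans (hχ s hs).symm
    rw [hpath t ht]
    rcases eq_or_ne t 1 with rfl | ht1
    · rw [Nat.sub_self, choicePath_zero, hp0]
    · rw [hpath (t - 1) (by simp at ht ⊢; omega)]
  · rintro ⟨χ, rfl⟩
    exact ⟨_, choicePath_zero χ, fun t ht => ⟨_, choicePath_of_mem χ ht⟩, rfl⟩

theorem optCost_nonneg : 0 ≤ optCost p₀ T kt rv :=
  Real.sInf_nonneg <| by
    rintro x ⟨p, -, -, rfl⟩
    exact Finset.sum_nonneg fun t _ => dist_nonneg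

theorem le_optCost (hkt : ∀ t ∈ Finset.Icc 1 T, 0 < kt t) {d : ℕ → ℝ}
    (hd : ∀ p : ℕ → E, p 0 = p₀ → (∀ s ∈ Finset.Icc 1 T, ∃ i, p s = rv s i) →
      ∀ t ∈ Finset.Icc 1 T, d t ≤ dist (p (t - 1)) (p t)) :
    ∑ t ∈ Finset.Icc 1 T, d t ≤ optCost p₀ T kt rv := by
  have : Nonempty ((t : Finset.Icc 1 T) → Fin (kt t)) := ⟨fun t => ⟨0, hkt t t.2⟩⟩
  rw [optCost_eq_iInf]
  exact le_ciInf fun χ => Finset.sum_le_sum <|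
    hd _ (choicePath_zero χ) fun s hs => ⟨_, choicePath_of_mem χ hs⟩

theorem optCost_le_mul_diam (hkt : ∀ t ∈ Finset.Icc 1 T, 0 < kt t) {S : Set E}
    (hS : Bornology.IsBounded S) (hp₀ : p₀ ∈ S) (hrv : ∀ t ∈ Finset.Icc 1 T, ∀ i, rv t i ∈ S) :
    optCost p₀ T kt rv ≤ T * diam S := by
  set χ : (t : Finset.Icc 1 T) → Fin (kt t) := fun t => ⟨0, hkt t t.2⟩
  have hχS : ∀ s, choicePath p₀ rv χ s ∈ S := fun s => by
    unfold choicePath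
    split_ifs with hs
    exacts [hrv s hs _, hp₀]
  calc optCost p₀ T kt rv ≤ pathCost T (choicePath p₀ rv χ) := by
        rw [optCost_eq_iInf]
        exact ciInf_le ⟨0, by rintro _ ⟨χ, rfl⟩; exact Finset.sum_nonneg fun _ _ => dist_nonneg⟩ χ
    _ ≤ ∑ _t ∈ Finset.Icc 1 T, diam S :=
        Finset.sum_le_sum fun t _ => dist_le_diam_of_mem hS (hχS _) (hχS _)
    _ = T * diam S := by simp

theorem measurable_optCost [MeasurableSpace E] [OpensMeasurableSpace E]
    [SecondCountableTopology E] {Ω : Type*} [MeasurableSpace Ω] {r : (t : ℕ) → Fin (kt t) → Ω → E}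
    (hr : ∀ t ∈ Finset.Icc 1 T, ∀ i, Measurable (r t i)) :
    Measurable fun ω => optCost p₀ T kt (fun t i => r t i ω) := by
  have hpath : ∀ χ s, Measurable fun ω => choicePath p₀ (fun t i => r t i ω) χ s := fun χ s => by
    unfold choicePath
    split_ifs with hs
    exacts [hr s hs _, measurable_const]
  simp_rw [optCost_eq_iInf]
  exact Measurable.iInf fun χ =>
    Finset.measurable_sum _ fun t _ => (hpath χ (t - 1)).dist (hpath χ t)

end ServingPaths

theorem sum_mul_measureReal_le_integral_optCost {Ω E : Type*} [MeasurableSpace Ω]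
    [PseudoMetricSpace E] [MeasurableSpace E] [OpensMeasurableSpace E] [SecondCountableTopology E]
    {P : Measure Ω} [IsFiniteMeasure P] {p₀ : E} {T : ℕ} {kt : ℕ → ℕ}
    (hkt : ∀ t ∈ Finset.Icc 1 T, 0 < kt t) {r : (t : ℕ) → Fin (kt t) → Ω → E}
    (hr : ∀ t ∈ Finset.Icc 1 T, ∀ i, Measurable (r t i)) {S : Set E} (hS : Bornology.IsBounded S)
    (hp₀ : p₀ ∈ S) (hrS : ∀ t ∈ Finset.Icc 1 T, ∀ i, ∀ᵐ ω ∂P, r t i ω ∈ S)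
    {A : ℕ → Set Ω} (hA : ∀ t ∈ Finset.Icc 1 T, MeasurableSet (A t)) {d : ℕ → ℝ}
    (hgap : ∀ t ∈ Finset.Icc 1 T, ∀ ω ∈ A t, ∀ p : ℕ → E, p 0 = p₀ →
      (∀ s ∈ Finset.Icc 1 T, ∃ i, p s = r s i ω) → d t ≤ dist (p (t - 1)) (p t)) :
    ∑ t ∈ Finset.Icc 1 T, d t * P.real (A t) ≤
      ∫ ω, optCost p₀ T kt (fun t i => r t i ω) ∂P := by
  have hind : ∀ t ∈ Finset.Icc 1 T, Integrable ((A t).indicator fun _ => d t) P :=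
    fun t ht => (integrable_const _).indicator (hA t ht)
  have hbound : ∀ᵐ ω ∂P, ‖optCost p₀ T kt (fun t i => r t i ω)‖ ≤ T * diam S := by
    have hrS' : ∀ᵐ ω ∂P, ∀ t ∈ Finset.Icc 1 T, ∀ i, r t i ω ∈ S := by
      simpa only [eventually_all_finset, ae_all_iff] using hrS
    filter_upwards [hrS'] with ω hω
    rw [Real.norm_of_nonneg optCost_nonneg]
    exact optCost_le_mul_diam hkt hS hp₀ hω
  calc ∑ t ∈ Finset.Icc 1 T, d t * P.real (A t)
      = ∫ ω, ∑ t ∈ Finset.Icc 1 T, (A t).indicator (fun _ => d t) ω ∂P := by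
        rw [integral_finsetSum _ hind]
        refine Finset.sum_congr rfl fun t ht => ?_
        rw [integral_indicator_const _ (hA t ht), smul_eq_mul, mul_comm]
    _ ≤ ∫ ω, optCost p₀ T kt (fun t i => r t i ω) ∂P := by
        refine integral_mono (integrable_finsetSum _ hind)
          (.of_bound (measurable_optCost hr).aestronglyMeasurable _ hbound) fun ω => ?_
        refine le_optCost hkt fun p hp0 hp t ht => ?_
        by_cases hω : ω ∈ A t
        · rw [Set.indicator_of_mem hω]
          exact hgap t ht ω hω p hp0 hp
        · rw [Set.indicator_of_notMem hω]
          exact dist_nonneg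

theorem chasing_small_sets_smoothed_opt_lower_bound_general
    {E : Type*} [NormedAddCommGroup E] [NormedSpace ℝ E]
    [MeasurableSpace E] [BorelSpace E] [FiniteDimensional ℝ E]
    {m : ℕ} (hm : 1 ≤ m) (hdim : Module.finrank ℝ E = m)
    (vol : Measure E) [vol.IsAddHaarMeasure]
    (c : E) {R : ℝ} (hR : 0 < R) {σ : ℝ} (hσ0 : 0 < σ)
    {k : ℕ} (hk : 1 ≤ k)
    {δ : ℝ} (hδ : δ = R * (σ / (2 * (k : ℝ) ^ 2)) ^ ((1 : ℝ) / m))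
    {Ω : Type*} {m0 : MeasurableSpace Ω} (P : Measure Ω) [IsProbabilityMeasure P]
    (T : ℕ) (F : Filtration ℕ m0)
    (kt : ℕ → ℕ) (hkt : ∀ t ∈ Finset.Icc 1 T, 1 ≤ kt t ∧ kt t ≤ k)
    (r : (t : ℕ) → Fin (kt t) → Ω → E)
    (hadapted : ∀ t ∈ Finset.Icc 1 T, ∀ i, Measurable[F t] (r t i))
    (hsupp : ∀ t ∈ Finset.Icc 1 T, ∀ i, ∀ᵐ ω ∂P, r t i ω ∈ closedBall c R)
    (hsmooth : ∀ t ∈ Finset.Icc 1 T, ∀ i,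
      ∀ S : Set E, S ⊆ closedBall c R → MeasurableSet S →
      ∀ᵐ ω ∂P,
        (P[fun ω' => S.indicator (fun _ => (1 : ℝ)) (r t i ω') | F (t - 1)]) ω ≤
          (vol S).toReal / (σ * (vol (closedBall c R)).toReal))
    (p₀ : E) (hp₀ : p₀ ∈ closedBall c R) :
    (δ / 2) * T ≤
      ∫ ω, sInf {x : ℝ | ∃ p : ℕ → E, p 0 = p₀ ∧
        (∀ t ∈ Finset.Icc 1 T, ∃ i, p t = r t i ω) ∧
        x = ∑ t ∈ Finset.Icc 1 T, dist (p (t - 1)) (p t)} ∂P := by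
  subst hdim
  have hE : Module.finrank ℝ E ≠ 0 := by omega
  have hδ0 : 0 ≤ δ := hδ ▸ by positivity
  have hr : ∀ t ∈ Finset.Icc 1 T, ∀ i, Measurable (r t i) :=
    fun t ht i => (hadapted t ht i).mono (F.le t) le_rfl
  have hsep : ∀ t ∈ Finset.Icc 1 T, ∃ A : Set Ω, MeasurableSet A ∧ 1 / 2 ≤ P.real A ∧
      ∀ ω ∈ A, ∀ p : ℕ → E, p 0 = p₀ → (∀ s ∈ Finset.Icc 1 T, ∃ i, p s = r s i ω) →
        δ ≤ dist (p (t - 1)) (p t) := by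
    intro t ht
    have hXs : ∀ i, IsCondSmooth P (F (t - 1)) vol c R σ (r t i) :=
      fun i => ⟨hsupp t ht i, hsmooth t ht i⟩
    rcases eq_or_ne t 1 with rfl | ht1
    · refine ⟨{ω | ∀ i (_ : Unit), δ < dist (r 1 i ω) p₀},
        measurableSet_forall_dist_gt (hr 1 ht) (fun _ => measurable_const) δ,
        half_le_measureReal_forall_dist_gt hXs (F.le _) (hr 1 ht) hR hσ0
          (fun _ => measurable_const) hE hk (by simpa using (hkt 1 ht).2) (by simpa using hk) hδ,
        ?_⟩
      rintro ω hω p hp0 hp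
      obtain ⟨i, hi⟩ := hp 1 ht
      rw [Nat.sub_self, hp0, hi, dist_comm]
      exact (hω i ()).le
    · have ht' : t - 1 ∈ Finset.Icc 1 T := by simp at ht ⊢; omega
      refine ⟨{ω | ∀ i j, δ < dist (r t i ω) (r (t - 1) j ω)},
        measurableSet_forall_dist_gt (hr t ht) (hr (t - 1) ht') δ,
        half_le_measureReal_forall_dist_gt hXs (F.le _) (hr t ht) hR hσ0
          (hadapted (t - 1) ht') hE hk (by simpa using (hkt t ht).2)
          (by simpa using (hkt (t - 1) ht').2) hδ, ?_⟩
      rintro ω hω p hp0 hp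
      obtain ⟨i, hi⟩ := hp t ht
      obtain ⟨j, hj⟩ := hp (t - 1) ht'
      rw [hi, hj, dist_comm]
      exact (hω i j).le
  choose! A hA_meas hA_prob hA_gap using hsep
  calc δ / 2 * T = ∑ _t ∈ Finset.Icc 1 T, δ * (1 / 2) := by
        rw [Finset.sum_const, Nat.card_Icc, Nat.add_sub_cancel, nsmul_eq_mul]
        ring
    _ ≤ ∑ t ∈ Finset.Icc 1 T, δ * P.real (A t) := by
        gcongr with t ht
        exact hA_prob t ht
    _ ≤ _ := sum_mul_measureReal_le_integral_optCost (fun t ht => (hkt t ht).1) hr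
        isBounded_closedBall hp₀ hsupp hA_meas hA_gap

/-- Lemma 3.3 of the paper, deterministic horizon `T`.
Let `E` be a real normed vector space of finite dimension `m ≥ 1`, let `B = closedBall c R`
with `R > 0`, `σ ∈ (0,1]`, `k ≥ 1`, and set `δ = R·(σ/(2k²))^{1/m}`. Suppose each request
`r t` (for `t = 1, …, T`) is a tuple of `kt t ≤ k` points of `B`, generated adaptively
(adapted to a filtration `F` recording all previous requests) so that, conditionally on
`F (t-1)`, each coordinate of `r t` has an almost surely `σ`-smooth distribution with
respect to `B`. Then for every start point `p₀ ∈ B`, the expected optimal offline cost for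
chasing these sets is at least `(δ/2)·T`. -/
theorem chasing_small_sets_smoothed_opt_lower_bound
    {E : Type*} [NormedAddCommGroup E] [NormedSpace ℝ E]
    [MeasurableSpace E] [BorelSpace E] [FiniteDimensional ℝ E]
    {m : ℕ} (hm : 1 ≤ m) (hdim : Module.finrank ℝ E = m)
    (vol : Measure E) [vol.IsAddHaarMeasure]
    (c : E) {R : ℝ} (hR : 0 < R) {σ : ℝ} (hσ0 : 0 < σ) (hσ1 : σ ≤ 1)
    {k : ℕ} (hk : 1 ≤ k)
    {δ : ℝ} (hδ : δ = R * (σ / (2 * (k : ℝ) ^ 2)) ^ ((1 : ℝ) / m))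
    {Ω : Type*} {m0 : MeasurableSpace Ω} (P : Measure Ω) [IsProbabilityMeasure P]
    (T : ℕ) (F : Filtration ℕ m0)
    (kt : ℕ → ℕ) (hkt : ∀ t ∈ Finset.Icc 1 T, 1 ≤ kt t ∧ kt t ≤ k)
    (r : (t : ℕ) → Fin (kt t) → Ω → E)
    (hadapted : ∀ t ∈ Finset.Icc 1 T, ∀ i, Measurable[F t] (r t i))
    (hsupp : ∀ t ∈ Finset.Icc 1 T, ∀ i, ∀ᵐ ω ∂P, r t i ω ∈ closedBall c R)
    (hsmooth : ∀ t ∈ Finset.Icc 1 T, ∀ i,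
      ∀ S : Set E, S ⊆ closedBall c R → MeasurableSet S →
      ∀ᵐ ω ∂P,
        (P[fun ω' => S.indicator (fun _ => (1 : ℝ)) (r t i ω') | F (t - 1)]) ω ≤
          (vol S).toReal / (σ * (vol (closedBall c R)).toReal))
    (p₀ : E) (hp₀ : p₀ ∈ closedBall c R) :
    (δ / 2) * T ≤
      ∫ ω, sInf {x : ℝ | ∃ p : ℕ → E, p 0 = p₀ ∧
        (∀ t ∈ Finset.Icc 1 T, ∃ i, p t = r t i ω) ∧
        x = ∑ t ∈ Finset.Icc 1 T, dist (p (t - 1)) (p t)} ∂P :=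
  chasing_small_sets_smoothed_opt_lower_bound_general hm hdim vol c hR hσ0 hk hδ P T F kt hkt r
    hadapted hsupp hsmooth p₀ hp₀
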